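/- Fix an integer t ≥ 0, k = 2t+1, and a real α ∈ [0,1]. Suppose c : ℕ → ℝ satisfies c(n) ≥ 0 for n ≤ k and, for all n > k, c(n) = Σ_{j=0}^{n−1} p_n(j)·(A_1(j)+A_2(j))·c(j) + t(n), where the toll function satisfies |t(n)| ≤ C·n^{δ} for a constant C and all n > k. If δ ∈ (0,1), then c(n) = O(n^{δ}); if δ = 0 (i.e., the toll is bounded), then c(n) = O(log n). -/

import Mathlib

open scoped Classical

/-- The beta function `B(a,b) = ∫_0^1 z^(a-1) (1-z)^(b-1) dz`. -/
noncomputable def betaFun (a b : ℝ) : ℝ := ∫ z in (0:ℝ)..1, z ^ (a - 1) * (1 - z) ^ (b - 1)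

/-- The regularized incomplete beta function `I_{x,y}(a,b)`. -/
noncomputable def regIncBeta (x y a b : ℝ) : ℝ :=
  (∫ z in x..y, z ^ (a - 1) * (1 - z) ^ (b - 1)) / betaFun a b

/-- The probability `P(I = i)` for `I ~ BetaBin(n,a,b)`. -/
noncomputable def betaBinPMF (n : ℕ) (a b : ℝ) (i : ℕ) : ℝ :=
  (n.choose i : ℝ) * betaFun (a + i) (b + ((n - i : ℕ) : ℝ)) / betaFun a b

/-- The `m`-th harmonic number. -/
noncomputable def harm (m : ℕ) : ℝ := ∑ i ∈ Finset.range m, (1 : ℝ) / (i + 1)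

/-- `p_n(j) = P(t + I = j)` for `I ~ BetaBin(n-k, t+1, t+1)`, `k = 2t+1`. -/
noncomputable def pnn (t n j : ℕ) : ℝ :=
  if t ≤ j then betaBinPMF (n - (2 * t + 1)) ((t : ℝ) + 1) ((t : ℝ) + 1) (j - t) else 0

/-- The indicator `A₁(j)` (with `j' = (n-1)-j` and `T = (n-1)/(1+α)`):
`[j ≤ T ∧ j' ≤ T ∧ j ≤ j'] + [j > T]`. -/
noncomputable def indA1 (α : ℝ) (n j : ℕ) : ℝ :=
  (if (j : ℝ) ≤ ((n : ℝ) - 1) / (1 + α) ∧ ((n : ℝ) - 1 - j) ≤ ((n : ℝ) - 1) / (1 + α)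
      ∧ (j : ℝ) ≤ (n : ℝ) - 1 - j then 1 else 0)
  + (if ((n : ℝ) - 1) / (1 + α) < (j : ℝ) then 1 else 0)

/-- The indicator `A₂(j)` (with `j' = (n-1)-j` and `T = (n-1)/(1+α)`):
`[j ≤ T ∧ j' ≤ T ∧ j < j'] + [j > T]`. -/
noncomputable def indA2 (α : ℝ) (n j : ℕ) : ℝ :=
  (if (j : ℝ) ≤ ((n : ℝ) - 1) / (1 + α) ∧ ((n : ℝ) - 1 - j) ≤ ((n : ℝ) - 1) / (1 + α)
      ∧ (j : ℝ) < (n : ℝ) - 1 - j then 1 else 0)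
  + (if ((n : ℝ) - 1) / (1 + α) < (j : ℝ) then 1 else 0)

/-!
Write `K n j = p_n(j) (A₁(j) + A₂(j))`. For `α ≤ 1` the threshold `(n-1)/(1+α)` is at least
`(n-1)/2`, so the weights of `K` at `j` and at `n-1-j` add up to `2`; as `p_n` is symmetric, every
increasing concave `f` satisfies `∑ⱼ K n j f(j+1) ≤ E f(max(j+1, n-j)) ≤ f(E max(j+1, n-j))`
(Jensen). The variance of the beta-binomial distribution, computed from the Bernstein polynomial
identities, gives `E max(j+1, n-j) ≤ 5/6 (n+1)`. Hence the recurrence maps the bound `M f(n+1)` to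
`M f(5/6 (n+1))`, which for `f = x^δ` is smaller by a fixed fraction of `(n+1)^δ` and for
`f = log x + log 2` is smaller by the constant `log (6/5)`: either margin absorbs the toll, and
strong induction on `n` concludes.
-/

open Finset

lemma betaFun_comm (a b : ℝ) : betaFun a b = betaFun b a := by
  rw [betaFun, betaFun]
  simpa [mul_comm] using
    (intervalIntegral.integral_comp_sub_left (fun z : ℝ => z ^ (a - 1) * (1 - z) ^ (b - 1))
      (a := 0) (b := 1) 1).symm

lemma betaFun_natCast_add_one (p q : ℕ) :
    betaFun (p + 1) (q + 1) = ∫ z in (0:ℝ)..1, z ^ p * (1 - z) ^ q := by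
  simp only [betaFun, add_sub_cancel_right, Real.rpow_natCast]

lemma betaFun_eq_beta {a b : ℝ} (ha : 0 < a) (hb : 0 < b) :
    betaFun a b = ProbabilityTheory.beta a b := by
  have h : Complex.betaIntegral a b = betaFun a b := by
    rw [Complex.betaIntegral, betaFun, ← intervalIntegral.integral_ofReal]
    refine intervalIntegral.integral_congr fun z hz => ?_
    rw [Set.uIcc_of_le zero_le_one] at hz
    push_cast [Complex.ofReal_cpow hz.1, Complex.ofReal_cpow (sub_nonneg.2 hz.2)]
    rfl
  rw [ProbabilityTheory.beta_eq_betaIntegralReal a b ha hb, h, Complex.ofReal_re]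

lemma betaFun_pos {a b : ℝ} (ha : 0 < a) (hb : 0 < b) : 0 < betaFun a b :=
  betaFun_eq_beta ha hb ▸ ProbabilityTheory.beta_pos ha hb

lemma betaFun_add_one_left {a b : ℝ} (ha : 0 < a) (hb : 0 < b) :
    betaFun (a + 1) b = a / (a + b) * betaFun a b := by
  rw [betaFun_eq_beta (by linarith) hb, betaFun_eq_beta ha hb, ProbabilityTheory.beta,
    ProbabilityTheory.beta, add_right_comm, Real.Gamma_add_one ha.ne',
    Real.Gamma_add_one (by linarith)]
  have := Real.Gamma_pos_of_pos (add_pos ha hb)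
  field_simp

section BetaBinomial

open Polynomial

variable {a b : ℝ} {m i : ℕ}

lemma betaBinPMF_nonneg (ha : 0 < a) (hb : 0 < b) (m i : ℕ) : 0 ≤ betaBinPMF m a b i := by
  have := betaFun_pos ha hb
  have := betaFun_pos (a := a + i) (b := b + (m - i : ℕ)) (by positivity) (by positivity)
  unfold betaBinPMF
  positivity

lemma betaBinPMF_eq_zero_of_lt (h : m < i) : betaBinPMF m a b i = 0 := by
  simp [betaBinPMF, Nat.choose_eq_zero_of_lt h]

lemma betaBinPMF_sub (hi : i ≤ m) : betaBinPMF m a b (m - i) = betaBinPMF m b a i := by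
  rw [betaBinPMF, betaBinPMF, Nat.choose_symm hi, Nat.sub_sub_self hi, betaFun_comm,
    betaFun_comm a]

lemma sum_betaBinPMF_mul (m p q : ℕ) (g : ℕ → ℝ) :
    ∑ i ∈ range (m + 1), betaBinPMF m (p + 1) (q + 1) i * g i =
      (∫ z in (0:ℝ)..1, z ^ p * (1 - z) ^ q *
          ∑ i ∈ range (m + 1), g i * (bernsteinPolynomial ℝ m i).eval z) /
        betaFun (p + 1) (q + 1) := by
  simp_rw [Finset.mul_sum]
  rw [intervalIntegral.integral_finsetSum fun i _ => by
    apply Continuous.intervalIntegrable; simp only [bernsteinPolynomial]; fun_prop]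
  rw [Finset.sum_div]
  refine Finset.sum_congr rfl fun i _ => ?_
  have hB : betaFun ((p:ℝ) + 1 + i) ((q:ℝ) + 1 + ((m - i : ℕ) : ℝ)) =
      ∫ z in (0:ℝ)..1, z ^ (p + i) * (1 - z) ^ (q + (m - i)) := by
    rw [← betaFun_natCast_add_one]; push_cast; ring_nf
  simp only [betaBinPMF, hB, bernsteinPolynomial, eval_mul, eval_pow, eval_natCast, eval_X,
    eval_sub, eval_one]
  have hI : ∫ z in (0:ℝ)..1,
        z ^ p * (1 - z) ^ q * (g i * (m.choose i * z ^ i * (1 - z) ^ (m - i))) =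
      g i * m.choose i * ∫ z in (0:ℝ)..1, z ^ (p + i) * (1 - z) ^ (q + (m - i)) := by
    rw [← intervalIntegral.integral_const_mul]
    exact intervalIntegral.integral_congr fun z _ => by simp only [pow_add]; ring
  rw [hI]
  ring

lemma sum_betaBinPMF (m p q : ℕ) :
    ∑ i ∈ range (m + 1), betaBinPMF m (p + 1) (q + 1) i = 1 := by
  have h (z : ℝ) : ∑ i ∈ range (m + 1), 1 * (bernsteinPolynomial ℝ m i).eval z = 1 := by
    simpa [eval_finsetSum] using congrArg (eval z) (bernsteinPolynomial.sum ℝ m)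
  have hpos := betaFun_pos (a := (p : ℝ) + 1) (b := (q : ℝ) + 1) (by positivity) (by positivity)
  have hsum := sum_betaBinPMF_mul m p q fun _ => 1
  simp_rw [h, mul_one, ← betaFun_natCast_add_one, div_self hpos.ne'] at hsum
  exact hsum

lemma sum_betaBinPMF_mul_cast (m p q : ℕ) :
    ∑ i ∈ range (m + 1), betaBinPMF m (p + 1) (q + 1) i * i = m * ((p + 1) / (p + q + 2)) := by
  have h (z : ℝ) :
      ∑ i ∈ range (m + 1), (i : ℝ) * (bernsteinPolynomial ℝ m i).eval z = m * z := by
    simpa [eval_finsetSum] using congrArg (eval z) (bernsteinPolynomial.sum_smul ℝ m)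
  have hB := betaFun_add_one_left (a := (p : ℝ) + 1) (b := (q : ℝ) + 1) (by positivity)
    (by positivity)
  have hpos := betaFun_pos (a := (p : ℝ) + 1) (b := (q : ℝ) + 1) (by positivity) (by positivity)
  rw [sum_betaBinPMF_mul]
  simp_rw [h]
  rw [intervalIntegral.integral_congr (g := fun z => (m : ℝ) * (z ^ (p + 1) * (1 - z) ^ q))
    fun z _ => by ring, intervalIntegral.integral_const_mul, ← betaFun_natCast_add_one,
    Nat.cast_add_one, hB]
  field_simp
  ring

lemma sum_betaBinPMF_mul_descFactorial_two (m p q : ℕ) :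
    ∑ i ∈ range (m + 1), betaBinPMF m (p + 1) (q + 1) i * (i * (i - 1)) =
      m * (m - 1) * ((p + 1) * (p + 2) / ((p + q + 2) * (p + q + 3))) := by
  have h (z : ℝ) :
      ∑ i ∈ range (m + 1), ((i : ℝ) * (i - 1)) * (bernsteinPolynomial ℝ m i).eval z =
        m * (m - 1) * z ^ 2 := by
    have hc (k : ℕ) : (k : ℝ) * ((k - 1 : ℕ) : ℝ) = k * (k - 1) := by
      rcases k with _ | k <;> simp
    simp_rw [← hc]
    simpa [eval_finsetSum, mul_assoc] using
      congrArg (eval z) (bernsteinPolynomial.sum_mul_smul ℝ m)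
  have hpos := betaFun_pos (a := (p : ℝ) + 1) (b := (q : ℝ) + 1) (by positivity) (by positivity)
  have hB1 := betaFun_add_one_left (a := (p : ℝ) + 1) (b := (q : ℝ) + 1) (by positivity)
    (by positivity)
  have hB2 := betaFun_add_one_left (a := (p : ℝ) + 1 + 1) (b := (q : ℝ) + 1) (by positivity)
    (by positivity)
  rw [sum_betaBinPMF_mul]
  simp_rw [h]
  rw [intervalIntegral.integral_congr
    (g := fun z => (m : ℝ) * (m - 1) * (z ^ (p + 2) * (1 - z) ^ q)) fun z _ => by ring,
    intervalIntegral.integral_const_mul, ← betaFun_natCast_add_one]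
  push_cast
  rw [show (p : ℝ) + 2 + 1 = p + 1 + 1 + 1 by ring, hB2, hB1]
  field_simp
  ring

lemma sum_betaBinPMF_mul_sq_sub_half_le (m t : ℕ) :
    ∑ i ∈ range (m + 1), betaBinPMF m (t + 1) (t + 1) i * ((i : ℝ) - m / 2) ^ 2 ≤
      (m : ℝ) ^ 2 / 12 + m / 4 := by
  have hexpand : ∑ i ∈ range (m + 1), betaBinPMF m (t + 1) (t + 1) i * ((i : ℝ) - m / 2) ^ 2 =
      ∑ i ∈ range (m + 1), betaBinPMF m (t + 1) (t + 1) i * (i * (i - 1)) +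
        (1 - m) * ∑ i ∈ range (m + 1), betaBinPMF m (t + 1) (t + 1) i * i +
        m ^ 2 / 4 * ∑ i ∈ range (m + 1), betaBinPMF m (t + 1) (t + 1) i := by
    simp only [Finset.mul_sum, ← Finset.sum_add_distrib]
    exact Finset.sum_congr rfl fun i _ => by ring
  have hm : (0 : ℝ) ≤ m * (m - 1) := by
    rcases m with _ | m
    · simp
    · push_cast; nlinarith
  rw [hexpand, sum_betaBinPMF_mul_descFactorial_two, sum_betaBinPMF_mul_cast, sum_betaBinPMF]
  have hmean : ((t : ℝ) + 1) / (t + t + 2) = 1 / 2 := by field_simp; ring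
  have hmoment : (t + 1 : ℝ) * (t + 2) / ((t + t + 2) * (t + t + 3)) =
      1 / 4 + 1 / (4 * (2 * t + 3)) := by
    field_simp; ring
  rw [hmoment, hmean, mul_one]
  have : (1 : ℝ) / (4 * (2 * t + 3)) ≤ 1 / 12 := by
    gcongr; linarith [t.cast_nonneg (α := ℝ)]
  nlinarith [mul_le_mul_of_nonneg_left this hm, m.cast_nonneg (α := ℝ)]

end BetaBinomial

section MedianPivot

variable {t n : ℕ}

lemma pnn_nonneg (t n j : ℕ) : 0 ≤ pnn t n j := by
  unfold pnn
  split_ifs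
  · exact betaBinPMF_nonneg (by positivity) (by positivity) _ _
  · exact le_rfl

lemma sum_pnn_mul (hn : 2 * t + 1 ≤ n) (g : ℕ → ℝ) :
    ∑ j ∈ range n, pnn t n j * g j =
      ∑ i ∈ range (n - (2 * t + 1) + 1),
        betaBinPMF (n - (2 * t + 1)) (t + 1) (t + 1) i * g (t + i) := by
  set m := n - (2 * t + 1)
  have hsub : (range (m + 1)).map (addLeftEmbedding t) ⊆ range n := by
    intro j; simp only [mem_map, mem_range, addLeftEmbedding_apply]; omega
  rw [← Finset.sum_subset hsub, Finset.sum_map]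
  · refine Finset.sum_congr rfl fun i _ => ?_
    simp [pnn, m]
  · intro j _ hj
    simp only [mem_map, mem_range, addLeftEmbedding_apply, not_exists, not_and] at hj
    unfold pnn
    split_ifs with h
    · rw [betaBinPMF_eq_zero_of_lt (by have := hj (j - t); omega), zero_mul]
    · rw [zero_mul]

lemma sum_pnn (hn : 2 * t + 1 ≤ n) : ∑ j ∈ range n, pnn t n j = 1 := by
  simpa [sum_betaBinPMF] using sum_pnn_mul hn 1

lemma pnn_reflect (hn : 2 * t + 1 ≤ n) {j : ℕ} (hj : j < n) :
    pnn t n (n - 1 - j) = pnn t n j := by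
  unfold pnn
  split_ifs with h₁ h₂ h₂
  · rw [show n - 1 - j - t = n - (2 * t + 1) - (j - t) by omega, betaBinPMF_sub (by omega)]
  · exact betaBinPMF_eq_zero_of_lt (by omega)
  · exact (betaBinPMF_eq_zero_of_lt (by omega)).symm
  · rfl

lemma sum_pnn_mul_max_le (hn : 2 * t + 1 < n) :
    ∑ j ∈ range n, pnn t n j * max ((j : ℝ) + 1) (n - j) ≤ 5 / 6 * (n + 1) := by
  set m := n - (2 * t + 1)
  have hm : (0 : ℝ) < m := by simp only [m]; exact_mod_cast (by omega : 0 < n - (2 * t + 1))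
  have hn' : (n : ℝ) = m + 2 * t + 1 := by simp only [m]; push_cast [hn.le]; ring
  -- AM-GM: `|x| ≤ m / 8 + 2 x² / m`
  have amgm (x : ℝ) : x ≤ m / 8 + 2 / m * x ^ 2 := by
    have : m / 8 + 2 / m * x ^ 2 - x = 2 / m * (x - m / 4) ^ 2 := by field_simp; ring
    nlinarith [show 0 ≤ 2 / (m : ℝ) * (x - m / 4) ^ 2 by positivity]
  -- for `j = t + i` one has `max (j + 1) (n - j) = (n + 1) / 2 + |i - m / 2|`
  have hpt (i : ℕ) : max (((t + i : ℕ) : ℝ) + 1) (n - (t + i : ℕ)) ≤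
      (n + 1) / 2 + m / 8 + 2 / m * ((i : ℝ) - m / 2) ^ 2 := by
    have h := amgm (m / 2 - i)
    rw [show ((m : ℝ) / 2 - i) ^ 2 = ((i : ℝ) - m / 2) ^ 2 by ring] at h
    push_cast
    exact max_le (by linarith [amgm (i - m / 2)]) (by linarith)
  have hq (i : ℕ) := betaBinPMF_nonneg (a := (t : ℝ) + 1) (b := (t : ℝ) + 1) (by positivity)
    (by positivity) m i
  calc ∑ j ∈ range n, pnn t n j * max ((j : ℝ) + 1) (n - j)
      ≤ ∑ i ∈ range (m + 1), betaBinPMF m (t + 1) (t + 1) i *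
          ((n + 1) / 2 + m / 8 + 2 / m * ((i : ℝ) - m / 2) ^ 2) := by
        rw [sum_pnn_mul hn.le]
        exact Finset.sum_le_sum fun i _ => mul_le_mul_of_nonneg_left (hpt i) (hq i)
    _ = ((n + 1) / 2 + m / 8) * ∑ i ∈ range (m + 1), betaBinPMF m (t + 1) (t + 1) i +
          2 / m * ∑ i ∈ range (m + 1),
            betaBinPMF m (t + 1) (t + 1) i * ((i : ℝ) - m / 2) ^ 2 := by
        simp only [Finset.mul_sum, ← Finset.sum_add_distrib]
        exact Finset.sum_congr rfl fun i _ => by ring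
    _ ≤ ((n + 1) / 2 + m / 8) * 1 + 2 / m * (m ^ 2 / 12 + m / 4) := by
        rw [sum_betaBinPMF]
        gcongr
        exact sum_betaBinPMF_mul_sq_sub_half_le m t
    _ ≤ 5 / 6 * (n + 1) := by
        rw [show 2 / (m : ℝ) * (m ^ 2 / 12 + m / 4) = m / 6 + 1 / 2 by field_simp; ring]
        linarith [t.cast_nonneg (α := ℝ)]

end MedianPivot

lemma indA1_add_indA2_nonneg (α : ℝ) (n j : ℕ) : 0 ≤ indA1 α n j + indA2 α n j := by
  unfold indA1 indA2
  split_ifs <;> norm_num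

lemma indA1_add_indA2_add_reflect {α : ℝ} (hα : -1 < α) (hα1 : α ≤ 1) {n j : ℕ}
    (hj : j < n) :
    indA1 α n j + indA2 α n j + (indA1 α n (n - 1 - j) + indA2 α n (n - 1 - j)) = 2 := by
  have hcast : ((n - 1 - j : ℕ) : ℝ) = n - 1 - j := by
    rw [Nat.cast_sub (by omega), Nat.cast_sub (by omega), Nat.cast_one]
  -- `j` and `n - 1 - j` cannot both exceed the threshold, which is at least their mean
  have hT : ((n : ℝ) - 1) / 2 ≤ ((n : ℝ) - 1) / (1 + α) := by
    have : (1 : ℝ) ≤ n := by exact_mod_cast (by omega : 1 ≤ n)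
    gcongr <;> linarith
  unfold indA1 indA2
  rw [hcast, sub_sub_cancel]
  simp only [ite_and]
  split_ifs <;> norm_num <;> linarith

lemma sum_mul_mul_le_sum_mul_max {n : ℕ} {p w g : ℕ → ℝ}
    (hp : ∀ j < n, p (n - 1 - j) = p j) (hp0 : ∀ j < n, 0 ≤ p j)
    (hw0 : ∀ j < n, 0 ≤ w j) (hw : ∀ j < n, w j + w (n - 1 - j) = 2) :
    ∑ j ∈ range n, p j * w j * g j ≤ ∑ j ∈ range n, p j * max (g j) (g (n - 1 - j)) := by
  have hreflect : ∑ j ∈ range n, p j * w j * g j =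
      ∑ j ∈ range n, p j * w (n - 1 - j) * g (n - 1 - j) := by
    rw [← Finset.sum_range_reflect]
    exact Finset.sum_congr rfl fun j hj => by rw [hp j (mem_range.1 hj)]
  have hpair : ∀ j ∈ range n, p j * w j * g j + p j * w (n - 1 - j) * g (n - 1 - j) ≤
      2 * (p j * max (g j) (g (n - 1 - j))) := by
    intro j hj
    have hj := mem_range.1 hj
    have h₁ := mul_le_mul_of_nonneg_left (le_max_left (g j) (g (n - 1 - j))) (hw0 j hj)
    have h₂ := mul_le_mul_of_nonneg_left (le_max_right (g j) (g (n - 1 - j)))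
      (hw0 (n - 1 - j) (by omega))
    have := mul_le_mul_of_nonneg_left (add_le_add h₁ h₂) (hp0 j hj)
    rw [← add_mul, hw j hj] at this
    linarith
  have := Finset.sum_le_sum hpair
  rw [Finset.sum_add_distrib, ← hreflect, ← Finset.mul_sum] at this
  linarith

lemma sum_pnn_mul_indA_mul_le {t n : ℕ} {α : ℝ} (hα : -1 < α) (hα1 : α ≤ 1)
    (hn : 2 * t + 1 < n) {f : ℝ → ℝ} (hf : ConcaveOn ℝ (Set.Ici 1) f)
    (hmono : MonotoneOn f (Set.Ici 1)) :
    ∑ j ∈ range n, pnn t n j * (indA1 α n j + indA2 α n j) * f (j + 1) ≤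
      f (5 / 6 * (n + 1)) := by
  have hn1 : (1 : ℝ) ≤ n := by exact_mod_cast (by omega : 1 ≤ n)
  have hmem (j : ℕ) : max ((j : ℝ) + 1) (n - j) ∈ Set.Ici 1 :=
    Set.mem_Ici.2 (le_max_of_le_left (by linarith [j.cast_nonneg (α := ℝ)]))
  have hp0 (j : ℕ) (_ : j ∈ range n) := pnn_nonneg t n j
  have hmean : ∑ j ∈ range n, pnn t n j * max ((j : ℝ) + 1) (n - j) ∈ Set.Ici 1 := by
    simpa using (convex_Ici (1 : ℝ)).sum_mem hp0 (sum_pnn hn.le) fun j _ => hmem j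
  calc ∑ j ∈ range n, pnn t n j * (indA1 α n j + indA2 α n j) * f (j + 1)
      ≤ ∑ j ∈ range n, pnn t n j * max (f (j + 1)) (f ((n - 1 - j : ℕ) + 1)) :=
        sum_mul_mul_le_sum_mul_max (fun j hj => pnn_reflect hn.le hj) (fun j _ => pnn_nonneg t n j)
          (fun j _ => indA1_add_indA2_nonneg α n j)
          (fun j hj => indA1_add_indA2_add_reflect hα hα1 hj)
    _ = ∑ j ∈ range n, pnn t n j * f (max ((j : ℝ) + 1) (n - j)) := by
        refine Finset.sum_congr rfl fun j hj => ?_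
        have hj : j + 1 ≤ n := mem_range.1 hj
        have hj' : (j : ℝ) + 1 ≤ n := by exact_mod_cast hj
        rw [show ((n - 1 - j : ℕ) : ℝ) + 1 = n - j by
          rw [Nat.cast_sub (by omega), Nat.cast_sub (by omega)]; ring,
          hmono.map_max (by simp) (Set.mem_Ici.2 (by linarith))]
    _ ≤ f (∑ j ∈ range n, pnn t n j * max ((j : ℝ) + 1) (n - j)) := by
        simpa using hf.le_map_sum hp0 (sum_pnn hn.le) fun j _ => hmem j
    _ ≤ f (5 / 6 * (n + 1)) :=
        hmono hmean (Set.mem_Ici.2 (by linarith)) (sum_pnn_mul_max_le hn)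

section Recurrence

variable {c T : ℕ → ℝ} {K : ℕ → ℕ → ℝ} {N : ℕ} {C : ℝ}

lemma exists_abs_le_mul_of_recurrence {φ d : ℕ → ℝ} (hK : ∀ n j, 0 ≤ K n j)
    (hφ : ∀ n ≤ N, 0 < φ n) (hd : ∀ n, N < n → 0 ≤ d n)
    (hKφ : ∀ n, N < n → ∑ j ∈ range n, K n j * φ j ≤ φ n - d n)
    (hT : ∀ n, N < n → |T n| ≤ C * d n)
    (hrec : ∀ n, N < n → c n = ∑ j ∈ range n, K n j * c j + T n) :
    ∃ M, 0 ≤ M ∧ ∀ n, |c n| ≤ M * φ n := by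
  set M := max C (∑ n ∈ range (N + 1), |c n| / φ n)
  have hM0 : 0 ≤ M := le_max_of_le_right <| Finset.sum_nonneg fun n hn =>
    div_nonneg (abs_nonneg _) (hφ n (Nat.lt_succ_iff.1 (mem_range.1 hn))).le
  refine ⟨M, hM0, fun n => ?_⟩
  induction n using Nat.strong_induction_on with
  | _ n ih =>
  rcases le_or_gt n N with hn | hn
  · have : |c n| / φ n ≤ M := le_max_of_le_right <|
      Finset.single_le_sum (f := fun n => |c n| / φ n)
        (fun k hk => div_nonneg (abs_nonneg _) (hφ k (Nat.lt_succ_iff.1 (mem_range.1 hk))).le)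
        (mem_range.2 (Nat.lt_succ_of_le hn))
    exact (div_le_iff₀ (hφ n hn)).1 this
  · have habs : |∑ j ∈ range n, K n j * c j| ≤ ∑ j ∈ range n, K n j * |c j| :=
      (abs_sum_le_sum_abs _ _).trans_eq <| Finset.sum_congr rfl fun j _ => by
        rw [abs_mul, abs_of_nonneg (hK n j)]
    rw [hrec n hn]
    calc |∑ j ∈ range n, K n j * c j + T n|
        ≤ ∑ j ∈ range n, K n j * (M * φ j) + C * d n :=
          (abs_add_le _ _).trans <| add_le_add (habs.trans <| Finset.sum_le_sum fun j hj =>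
            mul_le_mul_of_nonneg_left (ih j (mem_range.1 hj)) (hK n j)) (hT n hn)
      _ = M * ∑ j ∈ range n, K n j * φ j + C * d n := by
          rw [Finset.mul_sum]; congr 1; exact Finset.sum_congr rfl fun j _ => by ring
      _ ≤ M * (φ n - d n) + M * d n :=
          add_le_add (mul_le_mul_of_nonneg_left (hKφ n hn) hM0)
            (mul_le_mul_of_nonneg_right (le_max_left _ _) (hd n hn))
      _ = M * φ n := by ring

lemma exists_abs_le_mul_rpow_of_recurrence {δ θ : ℝ} (hδ : 0 < δ) (hθ0 : 0 ≤ θ)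
    (hθ1 : θ < 1) (hK : ∀ n j, 0 ≤ K n j)
    (hKφ : ∀ n, N < n →
      ∑ j ∈ range n, K n j * ((j : ℝ) + 1) ^ δ ≤ (θ * (n + 1)) ^ δ)
    (hT : ∀ n, N < n → |T n| ≤ C * (n : ℝ) ^ δ)
    (hrec : ∀ n, N < n → c n = ∑ j ∈ range n, K n j * c j + T n) :
    ∃ C : ℝ, ∃ N : ℕ, ∀ n ≥ N, |c n| ≤ C * (n : ℝ) ^ δ := by
  have hε : 0 < 1 - θ ^ δ := sub_pos.2 (Real.rpow_lt_one hθ0 hθ1 hδ)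
  obtain ⟨M, hM0, hM⟩ := exists_abs_le_mul_of_recurrence (C := C / (1 - θ ^ δ))
    (φ := fun n => ((n : ℝ) + 1) ^ δ) (d := fun n => (1 - θ ^ δ) * (n : ℝ) ^ δ) hK
    (fun n _ => by positivity) (fun n _ => by positivity)
    (fun n hn => by
      have : (n : ℝ) ^ δ ≤ ((n : ℝ) + 1) ^ δ := by gcongr; linarith
      have h := hKφ n hn
      rw [Real.mul_rpow hθ0 (by positivity)] at h
      nlinarith)
    (fun n hn => by rw [← mul_assoc, div_mul_cancel₀ _ hε.ne']; exact hT n hn) hrec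
  refine ⟨M * 2 ^ δ, 1, fun n hn => (hM n).trans ?_⟩
  have hn : (1 : ℝ) ≤ n := by exact_mod_cast hn
  calc M * ((n : ℝ) + 1) ^ δ ≤ M * (2 * n) ^ δ := by gcongr; linarith
    _ = M * 2 ^ δ * (n : ℝ) ^ δ := by rw [Real.mul_rpow zero_le_two (by linarith), mul_assoc]

lemma exists_abs_le_mul_log_of_recurrence {θ : ℝ} (hθ0 : 0 < θ) (hθ1 : θ < 1)
    (hK : ∀ n j, 0 ≤ K n j)
    (hKφ : ∀ n, N < n → ∑ j ∈ range n, K n j * (Real.log ((j : ℝ) + 1) + Real.log 2) ≤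
      Real.log (θ * (n + 1)) + Real.log 2)
    (hT : ∀ n, N < n → |T n| ≤ C)
    (hrec : ∀ n, N < n → c n = ∑ j ∈ range n, K n j * c j + T n) :
    ∃ C : ℝ, ∃ N : ℕ, ∀ n ≥ N, |c n| ≤ C * Real.log n := by
  have hε : 0 < -Real.log θ := neg_pos.2 (Real.log_neg hθ0 hθ1)
  obtain ⟨M, hM0, hM⟩ := exists_abs_le_mul_of_recurrence (C := C / -Real.log θ)
    (φ := fun n => Real.log ((n : ℝ) + 1) + Real.log 2) (d := fun _ => -Real.log θ) hK
    (fun n _ => add_pos_of_nonneg_of_pos (Real.log_nonneg (by simp)) (Real.log_pos one_lt_two))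
    (fun _ _ => hε.le)
    (fun n hn => by
      have h := hKφ n hn
      rw [Real.log_mul hθ0.ne' (by positivity)] at h
      linarith)
    (fun n hn => by rw [div_mul_cancel₀ _ hε.ne']; exact hT n hn) hrec
  refine ⟨3 * M, 2, fun n hn => (hM n).trans ?_⟩
  have hn : (2 : ℝ) ≤ n := by exact_mod_cast hn
  have : Real.log ((n : ℝ) + 1) + Real.log 2 ≤ 3 * Real.log n := by
    rw [← Real.log_mul (by positivity) two_ne_zero, show (3 : ℝ) = (3 : ℕ) by norm_num,
      ← Real.log_pow]
    exact Real.log_le_log (by positivity)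
      (by nlinarith [mul_le_mul hn hn zero_le_two (by linarith)])
  nlinarith

end Recurrence

theorem quickXsort_error_bound_general (t : ℕ) (α : ℝ) (hα0 : 0 ≤ α) (hα1 : α ≤ 1)
    (δ : ℝ) (hδ1 : δ < 1) (c T : ℕ → ℝ)
    (hT : ∃ C : ℝ, ∀ n, 2 * t + 1 < n → |T n| ≤ C * (n : ℝ) ^ δ)
    (hrec : ∀ n, 2 * t + 1 < n →
      c n = (∑ j ∈ Finset.range n, pnn t n j * (indA1 α n j + indA2 α n j) * c j) + T n) :
    (0 < δ → ∃ C : ℝ, ∃ N : ℕ, ∀ n ≥ N, |c n| ≤ C * (n : ℝ) ^ δ) ∧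
    (δ = 0 → ∃ C : ℝ, ∃ N : ℕ, ∀ n ≥ N, |c n| ≤ C * Real.log n) := by
  obtain ⟨C, hC⟩ := hT
  have hα : -1 < α := by linarith
  have hK (n j : ℕ) : 0 ≤ pnn t n j * (indA1 α n j + indA2 α n j) :=
    mul_nonneg (pnn_nonneg t n j) (indA1_add_indA2_nonneg α n j)
  have hIci : Set.Ici (1 : ℝ) ⊆ Set.Ici 0 := Set.Ici_subset_Ici.2 zero_le_one
  refine ⟨fun hδ => ?_, fun hδ => ?_⟩
  · refine exists_abs_le_mul_rpow_of_recurrence hδ (θ := 5 / 6) (by norm_num) (by norm_num) hK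
      (fun n hn => sum_pnn_mul_indA_mul_le hα hα1 hn
        ((Real.concaveOn_rpow hδ.le hδ1.le).subset hIci (convex_Ici 1))
        ((Real.monotoneOn_rpow_Ici_of_exponent_nonneg hδ.le).mono hIci)) hC hrec
  · subst hδ
    refine exists_abs_le_mul_log_of_recurrence (θ := 5 / 6) (by norm_num) (by norm_num) hK
      (fun n hn => sum_pnn_mul_indA_mul_le (f := fun x => Real.log x + Real.log 2) hα hα1 hn
        ((strictConcaveOn_log_Ioi.concaveOn.subset (fun x hx => lt_of_lt_of_le one_pos hx)
          (convex_Ici 1)).add_const _)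
        (fun x hx y _ hxy => add_le_add (Real.log_le_log (lt_of_lt_of_le one_pos hx) hxy) le_rfl))
      (fun n hn => by simpa using hC n hn) hrec

/-- **Error bound for the QuickXsort recurrence.** If `c` satisfies the QuickXsort
recurrence with median-of-`(2t+1)` pivots, buffer parameter `α ∈ [0,1]`, and a toll
function `T` with `|T n| ≤ C·n^δ` for all `n > k`, then `c(n) = O(n^δ)` when
`δ ∈ (0,1)`, and `c(n) = O(log n)` when `δ = 0`. -/
theorem quickXsort_error_bound (t : ℕ) (α : ℝ) (hα0 : 0 ≤ α) (hα1 : α ≤ 1)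
    (δ : ℝ) (hδ0 : 0 ≤ δ) (hδ1 : δ < 1) (c T : ℕ → ℝ)
    (hbase : ∀ n ≤ 2 * t + 1, 0 ≤ c n)
    (hT : ∃ C : ℝ, ∀ n, 2 * t + 1 < n → |T n| ≤ C * (n : ℝ) ^ δ)
    (hrec : ∀ n, 2 * t + 1 < n →
      c n = (∑ j ∈ Finset.range n, pnn t n j * (indA1 α n j + indA2 α n j) * c j) + T n) :
    (0 < δ → ∃ C : ℝ, ∃ N : ℕ, ∀ n ≥ N, |c n| ≤ C * (n : ℝ) ^ δ) ∧
    (δ = 0 → ∃ C : ℝ, ∃ N : ℕ, ∀ n ≥ N, |c n| ≤ C * Real.log n) :=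
  quickXsort_error_bound_general t α hα0 hα1 δ hδ1 c T hT hrec
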